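/- Let d, d', k be positive integers with gcd(d, d') = 1. Then o_{d·d'}(k)/k = (o_d(k)/k)·(o_{d'}(k)/k); equivalently, k·o_{d·d'}(k) = o_d(k)·o_{d'}(k). -/

import Mathlib

open scoped DirectSum

noncomputable section

/-- `o_d(k)`: the gcd, taken as a nonnegative integer, of the set
`{u ^ d - 1 | u ≡ 1 (mod k)}`, realized as the nonnegative generator of the ideal of `ℤ`
spanned by this set. -/
def oo (d k : ℕ) : ℕ :=
  (Submodule.IsPrincipal.generator
    (Ideal.span {z : ℤ | ∃ u : ℤ, (k : ℤ) ∣ (u - 1) ∧ z = u ^ d - 1})).natAbs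

/-!
Write `A = o_d(k)`, `B = o_{d'}(k)`, `C = o_{dd'}(k)`. Since `u ^ (d d') - 1` is divisible by
both `A` and `B`, `lcm A B ∣ C`; and `gcd A B ∣ k` because `1 + k` is a `d`-th and a `d'`-th
root of unity modulo `gcd A B`, hence is `1` there. This gives `A B ∣ k C`.
Conversely, one of `d, d'` is odd, say `d'`. For `u, v ≡ 1 (mod k)` and a prime `p ∣ k`, the
lifting-the-exponent lemma gives `v_p(w ^ d' - 1) = v_p(w - 1) + v_p(d')` for `w = u ^ d` and
for `w = v`, so `v_p(k C) ≤ v_p(k) + v_p(u ^ d - 1) + v_p(d') ≤ v_p((u ^ d - 1)(v ^ d' - 1))`;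
primes not dividing `k` do not divide `C` at all. So `k C` divides all products
`(u ^ d - 1)(v ^ d' - 1)`, which generate the ideal `(A B)`.
-/

def powSubOneSet (d k : ℕ) : Set ℤ := {z : ℤ | ∃ u : ℤ, (k : ℤ) ∣ u - 1 ∧ z = u ^ d - 1}

lemma span_oo (d k : ℕ) : Ideal.span {(oo d k : ℤ)} = Ideal.span (powSubOneSet d k) := by
  rw [oo, Ideal.span_singleton_eq_span_singleton.mpr (Int.associated_natAbs _).symm]
  exact Ideal.span_singleton_generator _

lemma dvd_oo_iff {d k : ℕ} {m : ℤ} :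
    m ∣ (oo d k : ℤ) ↔ ∀ u : ℤ, (k : ℤ) ∣ u - 1 → m ∣ u ^ d - 1 := by
  rw [← Ideal.span_singleton_le_span_singleton, span_oo, Ideal.span_le]
  constructor
  · exact fun h u hu => Ideal.mem_span_singleton.mp (h ⟨u, hu, rfl⟩)
  · rintro h _ ⟨u, hu, rfl⟩
    exact Ideal.mem_span_singleton.mpr (h u hu)

lemma oo_dvd_pow_sub_one {d k : ℕ} {u : ℤ} (hu : (k : ℤ) ∣ u - 1) :
    (oo d k : ℤ) ∣ u ^ d - 1 :=
  dvd_oo_iff.mp dvd_rfl u hu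

lemma oo_zero_left (k : ℕ) : oo 0 k = 0 := by
  have h : (0 : ℤ) ∣ (oo 0 k : ℤ) := dvd_oo_iff.mpr fun u _ => by simp
  exact_mod_cast zero_dvd_iff.mp h

lemma oo_zero_right (d : ℕ) : oo d 0 = 0 := by
  have h : (0 : ℤ) ∣ (oo d 0 : ℤ) := dvd_oo_iff.mpr fun u hu => by
    rw [Nat.cast_zero, zero_dvd_iff, sub_eq_zero] at hu
    simp [hu]
  exact_mod_cast zero_dvd_iff.mp h

lemma oo_ne_zero {d k : ℕ} (hd : d ≠ 0) (hk : k ≠ 0) : oo d k ≠ 0 := by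
  intro h0
  have hdvd : ((oo d k : ℕ) : ℤ) ∣ (1 + k) ^ d - 1 := oo_dvd_pow_sub_one (by simp)
  rw [h0, Nat.cast_zero, zero_dvd_iff] at hdvd
  have hlt : (1 : ℤ) < (1 + k) ^ d := one_lt_pow₀ (by omega) hd
  omega

lemma Int.dvd_sub_one_of_dvd_pow_sub_one {g : ℕ} {a : ℤ} {d d' : ℕ} (h : d.Coprime d')
    (hd : (g : ℤ) ∣ a ^ d - 1) (hd' : (g : ℤ) ∣ a ^ d' - 1) : (g : ℤ) ∣ a - 1 := by
  simp only [← ZMod.intCast_zmod_eq_zero_iff_dvd, Int.cast_sub, Int.cast_pow, Int.cast_one,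
    sub_eq_zero] at hd hd' ⊢
  exact (pow_eq_one_iff_of_coprime h).mp ⟨hd, hd'⟩

lemma gcd_oo_dvd {d d' k : ℕ} (h : d.Coprime d') : Nat.gcd (oo d k) (oo d' k) ∣ k := by
  have hone : (k : ℤ) ∣ (1 + k) - 1 := by simp
  have key : ((Nat.gcd (oo d k) (oo d' k) : ℕ) : ℤ) ∣ (1 + k) - 1 :=
    Int.dvd_sub_one_of_dvd_pow_sub_one h
      ((Int.natCast_dvd_natCast.mpr (Nat.gcd_dvd_left _ _)).trans (oo_dvd_pow_sub_one hone))
      ((Int.natCast_dvd_natCast.mpr (Nat.gcd_dvd_right _ _)).trans (oo_dvd_pow_sub_one hone))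
  exact Int.natCast_dvd_natCast.mp (by simpa using key)

lemma lcm_oo_dvd (d d' k : ℕ) : Nat.lcm (oo d k) (oo d' k) ∣ oo (d * d') k := by
  rw [← Int.natCast_dvd_natCast, dvd_oo_iff]
  intro u hu
  rw [Int.natCast_dvd]
  apply Nat.lcm_dvd <;> rw [← Int.natCast_dvd]
  · simpa [← pow_mul, Nat.mul_comm d'] using
      oo_dvd_pow_sub_one (d := d) (hu.trans (sub_one_dvd_pow_sub_one u d'))
  · simpa [← pow_mul] using oo_dvd_pow_sub_one (d := d') (hu.trans (sub_one_dvd_pow_sub_one u d))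

lemma oo_mul_oo_dvd {d d' k : ℕ} (h : d.Coprime d') : oo d k * oo d' k ∣ k * oo (d * d') k :=
  Nat.gcd_mul_lcm (oo d k) (oo d' k) ▸ mul_dvd_mul (gcd_oo_dvd h) (lcm_oo_dvd d d' k)

lemma dvd_of_prime_dvd_oo {d k : ℕ} {p : ℤ} (hp : Prime p) (hd : d ≠ 0) (h : p ∣ oo d k) :
    p ∣ k := by
  by_contra hpk
  obtain ⟨a, b, hab⟩ := (Prime.coprime_iff_not_dvd hp).mpr hpk
  -- `a * p = 1 - b * k` is `≡ 1 (mod k)` yet divisible by `p`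
  have hu : (k : ℤ) ∣ a * p - 1 := ⟨-b, by linarith⟩
  have h1 : p ∣ (a * p) ^ d - 1 := h.trans (oo_dvd_pow_sub_one hu)
  have h2 : p ∣ (a * p) ^ d := dvd_pow (dvd_mul_left p a) hd
  exact hp.not_dvd_one (by simpa using dvd_sub h2 h1)

lemma Int.emultiplicity_pow_sub_one {p : ℕ} (hp : p.Prime) {x : ℤ} (hx : (p : ℤ) ∣ x - 1)
    {n : ℕ} (hn : Odd p ∨ Odd n) :
    emultiplicity (p : ℤ) (x ^ n - 1) = emultiplicity (p : ℤ) (x - 1) + emultiplicity p n := by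
  have hpZ := Nat.prime_iff_prime_int.mp hp
  have hpx : ¬ (p : ℤ) ∣ x := fun h => hpZ.not_dvd_one (by simpa using dvd_sub h hx)
  by_cases hpn : p ∣ n
  · have hp_odd : Odd p := hn.elim id fun h => h.of_dvd_nat hpn
    simpa using Int.emultiplicity_pow_sub_pow hp hp_odd (y := 1) (by simpa) hpx n
  · rw [emultiplicity_eq_zero.mpr hpn, add_zero]
    simpa using emultiplicity_pow_sub_pow_of_prime hpZ (y := 1) (by simpa) hpx
      (n := n) (by exact_mod_cast hpn)

lemma Int.dvd_of_emultiplicity_natCast_le {a b : ℤ} (ha : a ≠ 0)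
    (h : ∀ p : ℕ, p.Prime → emultiplicity (p : ℤ) a ≤ emultiplicity (p : ℤ) b) : a ∣ b := by
  refine (UniqueFactorizationMonoid.dvd_iff_emultiplicity_le ha).mpr fun q hq => ?_
  rw [emultiplicity_eq_of_associated_left (Int.associated_natAbs q).symm,
    emultiplicity_eq_of_associated_left (Int.associated_natAbs q).symm]
  exact h _ (Int.prime_iff_natAbs_prime.mp hq)

lemma mul_oo_dvd_mul {d d' k : ℕ} (hd : d ≠ 0) (hk : k ≠ 0) (hodd : Odd d') {u v : ℤ}
    (hu : (k : ℤ) ∣ u - 1) (hv : (k : ℤ) ∣ v - 1) :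
    ((k * oo (d * d') k : ℕ) : ℤ) ∣ (u ^ d - 1) * (v ^ d' - 1) := by
  have hdd' : d * d' ≠ 0 := mul_ne_zero hd hodd.pos.ne'
  refine Int.dvd_of_emultiplicity_natCast_le (by exact_mod_cast mul_ne_zero hk (oo_ne_zero hdd' hk))
    fun p hp => ?_
  have hpZ := Nat.prime_iff_prime_int.mp hp
  push_cast
  rw [emultiplicity_mul hpZ, emultiplicity_mul hpZ]
  by_cases hpk : (p : ℤ) ∣ k
  · have hC : emultiplicity (p : ℤ) (oo (d * d') k) ≤ emultiplicity (p : ℤ) ((u ^ d) ^ d' - 1) :=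
      emultiplicity_le_emultiplicity_of_dvd_right <| by
        simpa [← pow_mul] using oo_dvd_pow_sub_one (d := d * d') hu
    have hkv : emultiplicity (p : ℤ) k ≤ emultiplicity (p : ℤ) (v - 1) :=
      emultiplicity_le_emultiplicity_of_dvd_right hv
    rw [Int.emultiplicity_pow_sub_one hp (hpk.trans (hu.trans (sub_one_dvd_pow_sub_one u d)))
      (Or.inr hodd)] at hC
    rw [Int.emultiplicity_pow_sub_one hp (hpk.trans hv) (Or.inr hodd)]
    calc _ ≤ emultiplicity (p : ℤ) (v - 1) +
          (emultiplicity (p : ℤ) (u ^ d - 1) + emultiplicity p d') := add_le_add hkv hC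
      _ = _ := by ring
  · have hpC : ¬ (p : ℤ) ∣ oo (d * d') k := fun h => hpk (dvd_of_prime_dvd_oo hpZ hdd' h)
    simp [emultiplicity_eq_zero.mpr hpk, emultiplicity_eq_zero.mpr hpC]

lemma mul_oo_dvd_oo_mul_oo {d d' k : ℕ} (hd : d ≠ 0) (hk : k ≠ 0) (hodd : Odd d') :
    k * oo (d * d') k ∣ oo d k * oo d' k := by
  rw [← Int.natCast_dvd_natCast, ← Ideal.span_singleton_le_span_singleton, Nat.cast_mul (oo d k),
    ← Ideal.span_singleton_mul_span_singleton, span_oo, span_oo, Ideal.span_mul_span',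
    Ideal.span_le]
  rintro _ ⟨_, ⟨u, hu, rfl⟩, _, ⟨v, hv, rfl⟩, rfl⟩
  exact Ideal.mem_span_singleton.mpr (mul_oo_dvd_mul hd hk hodd hu hv)

theorem stmt12_general (d d' k : ℕ)
    (h : Nat.Coprime d d') : k * oo (d * d') k = oo d k * oo d' k := by
  rcases eq_or_ne k 0 with rfl | hk
  · simp [oo_zero_right]
  rcases eq_or_ne d 0 with rfl | hd
  · simp [oo_zero_left]
  rcases eq_or_ne d' 0 with rfl | hd'
  · simp [oo_zero_left]
  refine Nat.dvd_antisymm ?_ (oo_mul_oo_dvd h)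
  rcases Nat.even_or_odd d' with hev | hodd
  · have hodd : Odd d := (h.coprime_dvd_right hev.two_dvd).odd_of_right
    simpa only [mul_comm d, mul_comm (oo d k)] using mul_oo_dvd_oo_mul_oo hd' hk hodd
  · exact mul_oo_dvd_oo_mul_oo hd hk hodd

theorem stmt12 (d d' k : ℕ) (hd : 0 < d) (hd' : 0 < d') (hk : 0 < k)
    (h : Nat.Coprime d d') : k * oo (d * d') k = oo d k * oo d' k :=
  stmt12_general d d' k h

end
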